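/- Let n < m and let Z = Z(n,m) : ℝⁿ → ℝᵐ be the wrinkled-embedding model. For every point p = (y₀,z₀) with |y₀|² + z₀² = 1, the normalized partial derivative v(y,z) = (∂Z/∂z)(y,z) / ‖(∂Z/∂z)(y,z)‖ converges, as (y,z) → p within the region {|y|² + z² > 1}, to the standard unit vector e ∈ ℝᵐ in the n-th coordinate direction (the coordinate carrying z³ + 3(|y|²−1)z), and converges, as (y,z) → p within the region {|y|² + z² < 1}, to −e. In particular the limiting tangent line, and hence the limiting tangent n-plane of Z, exists at every singular point. -/

import Mathlib

/-!
Along a vertical line, `∂Z/∂z = (0, 3t, t², 0)` depends only on the defect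
`t = |y|² + z² − 1`, and as a function of `t` it is a curve through the origin with
velocity `(0, 3, 0, 0)`. For `t ≠ 0` the normalization of a curve value `f t` is the
normalization of the difference quotient `t⁻¹ • f t` times the sign of `t`, so it tends to
`±` the normalized velocity as `t → 0±`. Approaching the sphere from outside (inside)
means `t → 0⁺` (`t → 0⁻`).
-/

open Filter Topology

/-- The wrinkled-embedding model `Z(n,m) : ℝⁿ → ℝᵐ`,
`Z(y,z) = (y, z³ + 3(|y|² − 1)z, ∫₀ᶻ (s² + |y|² − 1)² ds, 0, …, 0)`,
where `ℝⁿ = ℝ^{n−1} × ℝ` (so `k = n−1`) and the `m − n − 1` trailing zeros are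
collected in a Euclidean factor (so `l = m − n − 1`). -/
noncomputable def Zmap (k l : ℕ) (p : EuclideanSpace ℝ (Fin k) × ℝ) :
    EuclideanSpace ℝ (Fin k) × ℝ × ℝ × EuclideanSpace ℝ (Fin l) :=
  (p.1, p.2^3 + 3*(‖p.1‖^2 - 1)*p.2,
    ∫ s in (0:ℝ)..p.2, (s^2 + ‖p.1‖^2 - 1)^2, 0)

section Normalize

variable {V : Type*} [NormedAddCommGroup V] [NormedSpace ℝ V]

theorem inv_norm_smul_smul_of_pos {c : ℝ} (hc : 0 < c) (u : V) :
    ‖c • u‖⁻¹ • (c • u) = ‖u‖⁻¹ • u := by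
  rw [norm_smul, Real.norm_of_nonneg hc.le, smul_smul, mul_inv_rev,
    inv_mul_cancel_right₀ hc.ne']

theorem inv_norm_smul_smul_of_neg {c : ℝ} (hc : c < 0) (u : V) :
    ‖c • u‖⁻¹ • (c • u) = -(‖u‖⁻¹ • u) := by
  rw [← inv_norm_smul_smul_of_pos (neg_pos.2 hc) u, neg_smul, norm_neg, smul_neg, neg_neg]

theorem continuousAt_inv_norm_smul {v : V} (hv : v ≠ 0) :
    ContinuousAt (fun u : V => ‖u‖⁻¹ • u) v :=
  (continuousAt_id.norm.inv₀ (norm_ne_zero_iff.2 hv)).smul continuousAt_id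

variable {f : ℝ → V} {v : V}

theorem HasDerivAt.tendsto_inv_norm_smul_nhdsGT (hf : HasDerivAt f v 0) (hf0 : f 0 = 0)
    (hv : v ≠ 0) : Tendsto (fun t => ‖f t‖⁻¹ • f t) (𝓝[>] 0) (𝓝 (‖v‖⁻¹ • v)) := by
  have hslope : Tendsto (fun t => t⁻¹ • f t) (𝓝[>] 0) (𝓝 v) := by
    simpa [hf0] using hf.tendsto_slope_zero_right
  refine ((continuousAt_inv_norm_smul hv).tendsto.comp hslope).congr' ?_
  filter_upwards [self_mem_nhdsWithin] with t ht
  exact inv_norm_smul_smul_of_pos (inv_pos.2 ht) (f t)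

theorem HasDerivAt.tendsto_inv_norm_smul_nhdsLT (hf : HasDerivAt f v 0) (hf0 : f 0 = 0)
    (hv : v ≠ 0) : Tendsto (fun t => ‖f t‖⁻¹ • f t) (𝓝[<] 0) (𝓝 (-(‖v‖⁻¹ • v))) := by
  have hslope : Tendsto (fun t => t⁻¹ • f t) (𝓝[<] 0) (𝓝 v) := by
    simpa [hf0] using hf.tendsto_slope_zero_left
  refine ((continuousAt_inv_norm_smul hv).tendsto.comp hslope).neg.congr' ?_
  filter_upwards [self_mem_nhdsWithin] with t ht
  simp only [Function.comp_apply, inv_norm_smul_smul_of_neg (inv_lt_zero.2 ht), neg_neg]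

end Normalize

section Wrinkle

variable (k l : ℕ)

def wrinkleDeriv (t : ℝ) : EuclideanSpace ℝ (Fin k) × ℝ × ℝ × EuclideanSpace ℝ (Fin l) :=
  (0, 3 * t, t ^ 2, 0)

theorem hasDerivAt_Zmap (y : EuclideanSpace ℝ (Fin k)) (z : ℝ) :
    HasDerivAt (fun z => Zmap k l (y, z)) (wrinkleDeriv k l (‖y‖ ^ 2 + z ^ 2 - 1)) z := by
  have hcubic : HasDerivAt (fun z : ℝ => z ^ 3 + 3 * (‖y‖ ^ 2 - 1) * z)
      (3 * (‖y‖ ^ 2 + z ^ 2 - 1)) z := by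
    refine ((hasDerivAt_pow 3 z).add ((hasDerivAt_id' z).const_mul _)).congr_deriv ?_
    push_cast; ring
  have hcont : Continuous fun s : ℝ => (s ^ 2 + ‖y‖ ^ 2 - 1) ^ 2 := by fun_prop
  have hquartic : HasDerivAt (fun z : ℝ => ∫ s in (0 : ℝ)..z, (s ^ 2 + ‖y‖ ^ 2 - 1) ^ 2)
      ((‖y‖ ^ 2 + z ^ 2 - 1) ^ 2) z :=
    (intervalIntegral.integral_hasDerivAt_right (hcont.intervalIntegrable 0 z)
      hcont.aestronglyMeasurable.stronglyMeasurableAtFilter hcont.continuousAt).congr_deriv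
      (by ring)
  exact (hasDerivAt_const z y).prodMk (hcubic.prodMk (hquartic.prodMk (hasDerivAt_const z 0)))

theorem deriv_Zmap (y : EuclideanSpace ℝ (Fin k)) (z : ℝ) :
    deriv (fun z => Zmap k l (y, z)) z = wrinkleDeriv k l (‖y‖ ^ 2 + z ^ 2 - 1) :=
  (hasDerivAt_Zmap k l y z).deriv

theorem hasDerivAt_wrinkleDeriv_zero :
    HasDerivAt (wrinkleDeriv k l) (0, 3, 0, 0) 0 := by
  have hlin : HasDerivAt (fun t : ℝ => 3 * t) 3 0 := by
    simpa using (hasDerivAt_id' (0 : ℝ)).const_mul 3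
  have hsq : HasDerivAt (fun t : ℝ => t ^ 2) 0 0 := by simpa using hasDerivAt_pow 2 (0 : ℝ)
  exact (hasDerivAt_const 0 0).prodMk (hlin.prodMk (hsq.prodMk (hasDerivAt_const 0 0)))

theorem wrinkleDeriv_zero : wrinkleDeriv k l 0 = 0 := by
  simp [wrinkleDeriv]

theorem inv_norm_smul_zero_three_zero_zero :
    ‖((0, 3, 0, 0) : EuclideanSpace ℝ (Fin k) × ℝ × ℝ × EuclideanSpace ℝ (Fin l))‖⁻¹ •
      ((0, 3, 0, 0) : EuclideanSpace ℝ (Fin k) × ℝ × ℝ × EuclideanSpace ℝ (Fin l)) =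
      (0, 1, 0, 0) := by
  simp [Prod.norm_def]

theorem tendsto_normalized_wrinkleDeriv_nhdsGT :
    Tendsto (fun t => ‖wrinkleDeriv k l t‖⁻¹ • wrinkleDeriv k l t) (𝓝[>] 0)
      (𝓝 (0, 1, 0, 0)) := by
  rw [← inv_norm_smul_zero_three_zero_zero]
  exact (hasDerivAt_wrinkleDeriv_zero k l).tendsto_inv_norm_smul_nhdsGT
    (wrinkleDeriv_zero k l) (by simp)

theorem tendsto_normalized_wrinkleDeriv_nhdsLT :
    Tendsto (fun t => ‖wrinkleDeriv k l t‖⁻¹ • wrinkleDeriv k l t) (𝓝[<] 0)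
      (𝓝 (-(0, 1, 0, 0))) := by
  rw [← inv_norm_smul_zero_three_zero_zero]
  exact (hasDerivAt_wrinkleDeriv_zero k l).tendsto_inv_norm_smul_nhdsLT
    (wrinkleDeriv_zero k l) (by simp)

end Wrinkle

theorem Zmap_normalized_partial_limit_general (n m : ℕ)
    (p : EuclideanSpace ℝ (Fin (n - 1)) × ℝ) (hp : ‖p.1‖^2 + p.2^2 = 1) :
    Tendsto
      (fun q : EuclideanSpace ℝ (Fin (n - 1)) × ℝ =>
        ‖deriv (fun z => Zmap (n - 1) (m - n - 1) (q.1, z)) q.2‖⁻¹ •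
          deriv (fun z => Zmap (n - 1) (m - n - 1) (q.1, z)) q.2)
      (𝓝[{q : EuclideanSpace ℝ (Fin (n - 1)) × ℝ | ‖q.1‖^2 + q.2^2 > 1}] p)
      (𝓝 ((0, 1, 0, 0) :
        EuclideanSpace ℝ (Fin (n - 1)) × ℝ × ℝ × EuclideanSpace ℝ (Fin (m - n - 1)))) ∧
    Tendsto
      (fun q : EuclideanSpace ℝ (Fin (n - 1)) × ℝ =>
        ‖deriv (fun z => Zmap (n - 1) (m - n - 1) (q.1, z)) q.2‖⁻¹ •
          deriv (fun z => Zmap (n - 1) (m - n - 1) (q.1, z)) q.2)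
      (𝓝[{q : EuclideanSpace ℝ (Fin (n - 1)) × ℝ | ‖q.1‖^2 + q.2^2 < 1}] p)
      (𝓝 (-((0, 1, 0, 0) :
        EuclideanSpace ℝ (Fin (n - 1)) × ℝ × ℝ × EuclideanSpace ℝ (Fin (m - n - 1))))) := by
  set defect : EuclideanSpace ℝ (Fin (n - 1)) × ℝ → ℝ := fun q => ‖q.1‖ ^ 2 + q.2 ^ 2 - 1
  have hcont : Continuous defect := by fun_prop
  have hp0 : defect p = 0 := sub_eq_zero.2 hp
  simp_rw [deriv_Zmap]
  constructor
  · have hlim : Tendsto defect (𝓝[{q | ‖q.1‖^2 + q.2^2 > 1}] p) (𝓝[>] 0) :=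
      hp0 ▸ hcont.continuousWithinAt.tendsto_nhdsWithin fun q hq => by
        rw [Set.mem_Ioi, hp0]; exact sub_pos.2 hq
    exact (tendsto_normalized_wrinkleDeriv_nhdsGT _ _).comp hlim
  · have hlim : Tendsto defect (𝓝[{q | ‖q.1‖^2 + q.2^2 < 1}] p) (𝓝[<] 0) :=
      hp0 ▸ hcont.continuousWithinAt.tendsto_nhdsWithin fun q hq => by
        rw [Set.mem_Iio, hp0]; exact sub_neg.2 hq
    exact (tendsto_normalized_wrinkleDeriv_nhdsLT _ _).comp hlim

/-- At every singular point `p` (`|y|² + z² = 1`) of the model `Z(n,m)`, the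
normalized partial derivative `v = (∂Z/∂z)/‖∂Z/∂z‖` tends to the unit vector
`e` in the `n`-th coordinate direction as `(y,z) → p` within `{|y|² + z² > 1}`,
and tends to `−e` within `{|y|² + z² < 1}`. In particular the limiting tangent
line (hence the limiting tangent `n`-plane) exists at every singular point. -/
theorem Zmap_normalized_partial_limit (n m : ℕ) (hn : 1 ≤ n) (hnm : n < m)
    (p : EuclideanSpace ℝ (Fin (n - 1)) × ℝ) (hp : ‖p.1‖^2 + p.2^2 = 1) :
    Tendsto
      (fun q : EuclideanSpace ℝ (Fin (n - 1)) × ℝ =>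
        ‖deriv (fun z => Zmap (n - 1) (m - n - 1) (q.1, z)) q.2‖⁻¹ •
          deriv (fun z => Zmap (n - 1) (m - n - 1) (q.1, z)) q.2)
      (𝓝[{q : EuclideanSpace ℝ (Fin (n - 1)) × ℝ | ‖q.1‖^2 + q.2^2 > 1}] p)
      (𝓝 ((0, 1, 0, 0) :
        EuclideanSpace ℝ (Fin (n - 1)) × ℝ × ℝ × EuclideanSpace ℝ (Fin (m - n - 1)))) ∧
    Tendsto
      (fun q : EuclideanSpace ℝ (Fin (n - 1)) × ℝ =>
        ‖deriv (fun z => Zmap (n - 1) (m - n - 1) (q.1, z)) q.2‖⁻¹ •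
          deriv (fun z => Zmap (n - 1) (m - n - 1) (q.1, z)) q.2)
      (𝓝[{q : EuclideanSpace ℝ (Fin (n - 1)) × ℝ | ‖q.1‖^2 + q.2^2 < 1}] p)
      (𝓝 (-((0, 1, 0, 0) :
        EuclideanSpace ℝ (Fin (n - 1)) × ℝ × ℝ × EuclideanSpace ℝ (Fin (m - n - 1))))) :=
  Zmap_normalized_partial_limit_general n m p hp
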